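/- Let f : ℤ^m → ℚ be periodic with period p in each variable (i.e., f(x + p·e_i) = f(x) for every standard basis vector e_i and all x ∈ ℤ^m, where p is a positive integer), let j be a fixed nonnegative integer, and fix integers a_1, …, a_m, c_0, …, c_m, and d ≠ 0. Then the function Q_3 : ℤ^{m+1} → ℚ defined by Q_3(t_0, t_1, …, t_m) = Σ_{k=0}^{⌊(c_0 t_0 + ⋯ + c_m t_m)/d⌋} f(t_1 + a_1 k, …, t_m + a_m k) · k^j, where the sum is taken with the signed convention, is a quasipolynomial on ℤ^{m+1}. -/

import Mathlib

/-- A function `Q : ℤ^d → ℚ` is a quasipolynomial if there are a positive integer `p`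
and polynomials `q_r ∈ ℚ[x₁,…,x_d]`, indexed by residue vectors `r ∈ (ℤ/p)^d`, with
`Q t = q_{t mod p}(t)` for all `t ∈ ℤ^d`. -/
def IsQuasiPolynomial {d : ℕ} (Q : (Fin d → ℤ) → ℚ) : Prop :=
  ∃ p : ℕ, 0 < p ∧ ∃ q : (Fin d → ZMod p) → MvPolynomial (Fin d) ℚ,
    ∀ t : Fin d → ℤ, Q t = MvPolynomial.eval (fun i => (t i : ℚ)) (q fun i => (t i : ZMod p))

/-- The signed convention for a finite sum `∑_{k=a}^{b} f(k)` over integers: the ordinary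
sum if `a ≤ b`, the value `0` if `a = b + 1`, and `-∑_{k=b+1}^{a-1} f(k)` if `a ≥ b + 2`. -/
noncomputable def signedSum (a b : ℤ) (f : ℤ → ℚ) : ℚ :=
  if a ≤ b then ∑ k ∈ Finset.Icc a b, f k else -∑ k ∈ Finset.Icc (b + 1) (a - 1), f k

/-!
Since `f` is `p`-periodic, `f (t' + a k)` depends only on `k mod p`, so the signed sum splits as
`∑_{s mod p} f (t' + a s) * S_s(N)`, where `S_s` is the signed partial sum of the one-variable
quasipolynomial `k ↦ [k ≡ s mod p] k^j`. Signed partial sums of a quasipolynomial of period `q`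
are quasipolynomials of period `q`: along a residue class `N = ν + q l` their first difference is
a polynomial in `l`, and every polynomial has a polynomial antidifference (Bernoulli polynomials).
Finally, on each residue class of `t` modulo `p |d|`, `N = ⌊c · t / d⌋` is an affine function of
`t` with a fixed residue modulo `p`, and the functions that are polynomial on the residue classes
modulo a fixed `M` form a `ℚ`-algebra.
-/

open Polynomial

section signedSum

variable (a : ℤ) (g : ℤ → ℚ)

theorem signedSum_add_one (b : ℤ) : signedSum a (b + 1) g = signedSum a b g + g (b + 1) := by
  unfold signedSum
  rcases lt_trichotomy (b + 1) a with h | rfl | h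
  · have hIcc : Finset.Icc (b + 1) (a - 1) = insert (b + 1) (Finset.Icc (b + 1 + 1) (a - 1)) := by
      ext; simp only [Finset.mem_Icc, Finset.mem_insert]; omega
    rw [if_neg (by omega), if_neg (by omega), hIcc, Finset.sum_insert (by simp)]
    ring
  · simp
  · have hIcc : Finset.Icc a (b + 1) = insert (b + 1) (Finset.Icc a b) := by
      ext; simp only [Finset.mem_Icc, Finset.mem_insert]; omega
    rw [if_pos (by omega), if_pos (by omega), hIcc, Finset.sum_insert (by simp), add_comm]

theorem signedSum_add_natCast (b : ℤ) (n : ℕ) :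
    signedSum a (b + n) g = signedSum a b g + ∑ i ∈ Finset.range n, g (b + i + 1) := by
  induction n with
  | zero => simp
  | succ n ih =>
    rw [Finset.sum_range_succ, ← add_assoc, ← ih, Nat.cast_succ, ← add_assoc, signedSum_add_one]

theorem signedSum_finset_sum {ι : Type*} (s : Finset ι) (b : ℤ) (F : ι → ℤ → ℚ) :
    signedSum a b (fun k => ∑ i ∈ s, F i k) = ∑ i ∈ s, signedSum a b (F i) := by
  unfold signedSum
  split_ifs
  · exact Finset.sum_comm
  · rw [Finset.sum_comm, Finset.sum_neg_distrib]

theorem signedSum_const_mul (b : ℤ) (c : ℚ) (u : ℤ → ℚ) :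
    signedSum a b (fun k => c * u k) = c * signedSum a b u := by
  unfold signedSum
  split_ifs <;> simp [Finset.mul_sum]

end signedSum

theorem Polynomial.exists_eval_add_one_sub_eval (P : ℚ[X]) :
    ∃ Q : ℚ[X], ∀ x : ℚ, Q.eval (x + 1) - Q.eval x = P.eval x := by
  induction P using Polynomial.induction_on' with
  | add P₁ P₂ h₁ h₂ =>
    obtain ⟨Q₁, hQ₁⟩ := h₁
    obtain ⟨Q₂, hQ₂⟩ := h₂
    exact ⟨Q₁ + Q₂, fun x => by simp only [eval_add]; linarith [hQ₁ x, hQ₂ x]⟩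
  | monomial n c =>
    refine ⟨C (c / (n + 1)) * bernoulli (n + 1), fun x => ?_⟩
    simp only [eval_mul, eval_C, eval_monomial, add_comm x 1, bernoulli_eval_one_add]
    field_simp
    push_cast
    ring

theorem Polynomial.exists_eval_eq_of_sub_eq_eval {H : ℤ → ℚ} {E : ℚ[X]}
    (h : ∀ l : ℤ, H (l + 1) - H l = E.eval (l : ℚ)) :
    ∃ P : ℚ[X], ∀ l : ℤ, H l = P.eval (l : ℚ) := by
  obtain ⟨Q, hQ⟩ := E.exists_eval_add_one_sub_eval
  have hper : Function.Periodic (fun x : ℤ => H x - Q.eval (x : ℚ)) 1 := fun l => by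
    push_cast
    linarith [h l, hQ l]
  refine ⟨Q + C (H 0 - Q.eval 0), fun l => ?_⟩
  have := hper.int_mul_eq l
  simp only [mul_one, Int.cast_id, Int.cast_zero] at this
  simp only [eval_add, eval_C]
  linarith

theorem ZMod.val_intCast_add_mul_ediv {n : ℕ} [NeZero n] (k : ℤ) :
    ((k : ZMod n).val : ℤ) + n * (k / n) = k := by
  rw [ZMod.val_intCast, Int.emod_add_mul_ediv]

theorem ZMod.natCast_dvd_sub_val_intCast {n : ℕ} [NeZero n] (k : ℤ) :
    (n : ℤ) ∣ k - ((k : ZMod n).val : ℤ) :=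
  ⟨k / n, by linarith [ZMod.val_intCast_add_mul_ediv (n := n) k]⟩

theorem exists_signedSum_eq_eval_of_eq_eval {q : ℕ} [NeZero q] {g : ℤ → ℚ} (u : ZMod q → ℚ[X])
    (hg : ∀ k : ℤ, g k = (u k).eval (k : ℚ)) (a : ℤ) :
    ∃ v : ZMod q → ℚ[X], ∀ N : ℤ, signedSum a N g = (v N).eval (N : ℚ) := by
  have hres (ν : ZMod q) : ∃ P : ℚ[X], ∀ l : ℤ, signedSum a (ν.val + q * l) g = P.eval (l : ℚ) := by
    refine exists_eval_eq_of_sub_eq_eval (E := ∑ i ∈ Finset.range q,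
      (u (ν + i + 1)).comp (C ((ν.val + i + 1 : ℕ) : ℚ) + C (q : ℚ) * X)) fun l => ?_
    rw [mul_add_one, ← add_assoc, signedSum_add_natCast, add_sub_cancel_left, eval_finsetSum]
    refine Finset.sum_congr rfl fun i _ => ?_
    rw [hg, eval_comp]
    congr 1
    · simp only [eval_add, eval_mul, eval_C, eval_X]
      push_cast
      ring
    · push_cast; simp
  choose P hP using hres
  refine ⟨fun ν => (P ν).comp (C (q : ℚ)⁻¹ * (X - C (ν.val : ℚ))), fun N => ?_⟩
  have hN := ZMod.val_intCast_add_mul_ediv (n := q) N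
  have hNq : ((N : ZMod q).val : ℚ) + q * ((N / q : ℤ) : ℚ) = N := by exact_mod_cast hN
  conv_lhs => rw [← hN]
  rw [hP, eval_comp]
  simp only [eval_mul, eval_C, eval_sub, eval_X]
  congr 1
  field_simp [NeZero.ne q]
  linarith

theorem eq_of_forall_dvd_sub_of_update_add {ι β : Type*} [Fintype ι] [DecidableEq ι]
    {f : (ι → ℤ) → β} {p : ℤ} (hf : ∀ (x : ι → ℤ) (i : ι), f (Function.update x i (x i + p)) = f x)
    {x y : ι → ℤ} (h : ∀ i, p ∣ x i - y i) : f x = f y := by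
  have hper (i : ι) : Function.Periodic f (Pi.single i p) := fun x => by
    convert hf x i using 2
    ext k
    by_cases hk : k = i <;> simp [hk]
  choose z hz using h
  have hsum : Function.Periodic f (∑ i, z i • Pi.single i p) :=
    Finset.sum_induction _ (Function.Periodic f) (fun _ _ => Function.Periodic.add_period)
      (fun _ => by rw [add_zero]) fun i _ => (hper i).zsmul (z i)
  rw [← hsum y]
  congr
  ext i
  simp only [Pi.add_apply, Finset.sum_apply, Pi.smul_apply, Pi.single_apply, smul_eq_mul, mul_ite,
    mul_zero, Finset.sum_ite_eq, Finset.mem_univ, if_true]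
  linarith [hz i]

theorem signedSum_periodic_mul_eq_sum {p : ℕ} [NeZero p] (a b : ℤ) {h : ℤ → ℚ}
    (hh : Function.Periodic h p) (w : ℤ → ℚ) :
    signedSum a b (fun k => h k * w k)
      = ∑ s : ZMod p, h s.val * signedSum a b (fun k => if (k : ZMod p) = s then w k else 0) := by
  have hpt (k : ℤ) :
      h k * w k = ∑ s : ZMod p, h s.val * (if (k : ZMod p) = s then w k else 0) := by
    have hk : h k = h (k : ZMod p).val := by
      conv_lhs => rw [← ZMod.val_intCast_add_mul_ediv (n := p) k, mul_comm]
      exact hh.int_mul _ _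
    simp [hk]
  simp_rw [hpt, signedSum_finset_sum, signedSum_const_mul]

theorem MvPolynomial.eval_polynomial_aeval {σ : Type*} (φ : σ → ℚ) (P : MvPolynomial σ ℚ)
    (w : ℚ[X]) : MvPolynomial.eval φ (Polynomial.aeval P w) = w.eval (MvPolynomial.eval φ P) := by
  rw [Polynomial.aeval_def, Polynomial.hom_eval₂,
    Subsingleton.elim ((MvPolynomial.eval φ).comp (algebraMap ℚ _)) (RingHom.id ℚ)]
  rfl

theorem Int.floor_intCast_add_mul_div {e : ℤ} (he : e ≠ 0) (σ z : ℤ) :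
    ⌊((σ + e * z : ℤ) : ℚ) / e⌋ = ⌊(σ : ℚ) / e⌋ + z := by
  rw [Int.cast_add, add_div, Int.cast_mul, mul_div_cancel_left₀ _ (Int.cast_ne_zero.2 he),
    Int.floor_add_intCast]

def quasiPolynomialsMod (d M : ℕ) : Subalgebra ℚ ((Fin d → ℤ) → ℚ) where
  carrier := {Q | ∃ q : (Fin d → ZMod M) → MvPolynomial (Fin d) ℚ, ∀ t : Fin d → ℤ,
    Q t = MvPolynomial.eval (fun i => (t i : ℚ)) (q fun i => (t i : ZMod M))}
  mul_mem' := by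
    rintro _ _ ⟨q₁, h₁⟩ ⟨q₂, h₂⟩
    exact ⟨q₁ * q₂, fun t => by simp [h₁, h₂]⟩
  add_mem' := by
    rintro _ _ ⟨q₁, h₁⟩ ⟨q₂, h₂⟩
    exact ⟨q₁ + q₂, fun t => by simp [h₁, h₂]⟩
  algebraMap_mem' c := ⟨fun _ => MvPolynomial.C c, fun _ => by simp⟩

theorem mem_quasiPolynomialsMod_of_forall_dvd_sub {d M : ℕ} [NeZero M] {Q : (Fin d → ℤ) → ℚ}
    (hQ : ∀ t t' : Fin d → ℤ, (∀ i, (M : ℤ) ∣ t i - t' i) → Q t = Q t') :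
    Q ∈ quasiPolynomialsMod d M :=
  ⟨fun r => MvPolynomial.C (Q fun i => (r i).val), fun t => by
    rw [MvPolynomial.eval_C]
    exact hQ _ _ fun i => ZMod.natCast_dvd_sub_val_intCast (t i)⟩

theorem eval_floor_mem_quasiPolynomialsMod {d p : ℕ} [NeZero p] (v : ZMod p → ℚ[X])
    (c : Fin d → ℤ) {e : ℤ} (he : e ≠ 0) :
    (fun t : Fin d → ℤ => (v ⌊((∑ i, c i * t i : ℤ) : ℚ) / e⌋).eval
      (⌊((∑ i, c i * t i : ℤ) : ℚ) / e⌋ : ℚ)) ∈ quasiPolynomialsMod d (p * e.natAbs) := by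
  set M := p * e.natAbs
  have : NeZero M := ⟨mul_ne_zero (NeZero.ne p) (Int.natAbs_ne_zero.2 he)⟩
  let σ : (Fin d → ZMod M) → ℤ := fun r => ∑ i, c i * (r i).val
  -- the affine polynomial `⌊σ / e⌋ + (c · t - σ) / e`, which is the floor whenever `p e ∣ c · t - σ`
  refine ⟨fun r => aeval (MvPolynomial.C ((⌊(σ r : ℚ) / e⌋ : ℚ) - σ r / e)
      + ∑ i, MvPolynomial.C ((c i : ℚ) / e) * MvPolynomial.X i) (v ⌊(σ r : ℚ) / e⌋), fun t => ?_⟩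
  have hpeM : (p * e : ℤ) ∣ M := by
    simp only [M, Nat.cast_mul]
    exact mul_dvd_mul_left _ (Int.dvd_natAbs.2 dvd_rfl)
  obtain ⟨y, hy⟩ : (p * e : ℤ) ∣ ∑ i, c i * t i - σ (fun i => t i) := by
    rw [← Finset.sum_sub_distrib]
    refine Finset.dvd_sum fun i _ => ?_
    rw [← mul_sub]
    exact (hpeM.trans (ZMod.natCast_dvd_sub_val_intCast _)).mul_left _
  have hfloor : ⌊((∑ i, c i * t i : ℤ) : ℚ) / e⌋ = ⌊(σ (fun i => t i) : ℚ) / e⌋ + p * y := by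
    rw [show ∑ i, c i * t i = σ (fun i => t i) + e * (p * y) by linarith,
      Int.floor_intCast_add_mul_div he]
  simp only [MvPolynomial.eval_polynomial_aeval, hfloor]
  congr 1
  · have hyq : ((∑ i, c i * t i : ℤ) : ℚ) = σ (fun i => t i) + p * e * y := by
      exact_mod_cast (sub_eq_iff_eq_add'.1 hy)
    simp only [map_add, map_sum, map_mul, MvPolynomial.eval_C, MvPolynomial.eval_X]
    simp_rw [div_mul_eq_mul_div, ← Finset.sum_div]
    push_cast at hyq ⊢
    rw [hyq]
    field_simp
    ring
  · simp

/-- **Core case of the lemma on quasipolynomials.**  If `f : ℤ^m → ℚ` is periodic with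
period `p > 0` in each variable, `j` is a fixed nonnegative integer, and
`a₁,…,a_m, c₀,…,c_m, d` are integers with `d ≠ 0`, then
`Q₃(t₀,…,t_m) = ∑_{k=0}^{⌊(c₀t₀+⋯+c_mt_m)/d⌋} f(t₁+a₁k, …, t_m+a_mk) · k^j`
(signed-sum convention) is a quasipolynomial on `ℤ^{m+1}`. -/
theorem quasipolynomial_signed_sum_periodic
    (m : ℕ) (f : (Fin m → ℤ) → ℚ) (p : ℕ) (hp : 0 < p)
    (hf : ∀ (x : Fin m → ℤ) (i : Fin m), f (Function.update x i (x i + (p : ℤ))) = f x)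
    (j : ℕ) (a : Fin m → ℤ) (c : Fin (m + 1) → ℤ) (d : ℤ) (hd : d ≠ 0) :
    IsQuasiPolynomial (fun t : Fin (m + 1) → ℤ =>
      signedSum 0 ⌊((∑ i, c i * t i : ℤ) : ℚ) / (d : ℚ)⌋
        (fun k => f (fun i => t i.succ + a i * k) * (k : ℚ) ^ j)) := by
  have : NeZero p := ⟨hp.ne'⟩
  have : NeZero (p * d.natAbs) := ⟨mul_ne_zero hp.ne' (Int.natAbs_ne_zero.2 hd)⟩
  have hperiodic (y : Fin m → ℤ) : Function.Periodic (fun k : ℤ => f fun i => y i + a i * k) p :=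
    fun k => eq_of_forall_dvd_sub_of_update_add hf fun i => ⟨a i, by ring⟩
  choose v hv using fun s : ZMod p => exists_signedSum_eq_eval_of_eq_eval
    (g := fun k => if (k : ZMod p) = s then (k : ℚ) ^ j else 0)
    (fun r => if r = s then X ^ j else 0) (fun k => by split_ifs <;> simp) 0
  have hsum : (fun t : Fin (m + 1) → ℤ => signedSum 0 ⌊((∑ i, c i * t i : ℤ) : ℚ) / (d : ℚ)⌋
        (fun k => f (fun i => t i.succ + a i * k) * (k : ℚ) ^ j))
      = ∑ s : ZMod p, (fun t => f fun i => t i.succ + a i * s.val) * fun t =>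
          (v s ⌊((∑ i, c i * t i : ℤ) : ℚ) / d⌋).eval (⌊((∑ i, c i * t i : ℤ) : ℚ) / d⌋ : ℚ) := by
    funext t
    simp [signedSum_periodic_mul_eq_sum 0 _ (hperiodic _), hv]
  rw [hsum]
  refine ⟨p * d.natAbs, NeZero.pos _, (Subalgebra.sum_mem _ fun s _ => Subalgebra.mul_mem _ ?_
    (eval_floor_mem_quasiPolynomialsMod _ c hd) : _ ∈ quasiPolynomialsMod _ _)⟩
  refine mem_quasiPolynomialsMod_of_forall_dvd_sub fun t t' h =>
    eq_of_forall_dvd_sub_of_update_add hf fun i => ?_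
  rw [add_sub_add_right_eq_sub]
  exact (Int.natCast_dvd_natCast.2 (dvd_mul_right p _)).trans (h i.succ)
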